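/- arXiv:1101.2728 — 11 statements merged into one kernel-verified Lean document; each statement's English description precedes it below -/
import Mathlib

section
/- An n×N matrix L over F_q corresponds to a δ-error-correcting index code for the instance (m,n,X,f) if and only if for every vector z ∈ F_q^n for which there exists i ∈ [m] with z restricted to X_i equal to zero and z_{f(i)} ≠ 0, the Hamming weight of zL is at least 2δ+1. -/
/-!
A receiver can decode exactly when no two messages with the same side information but different
demanded symbols have codewords within Hamming distance `2δ`: two codewords at distance at most
`2δ` have a common word within distance `δ` of both, which the receiver cannot tell apart, while
if all such pairs are farther apart, every word within distance `δ` of some codeword determines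
the demanded symbol. For a linear code, pairs of messages reduce to their difference `z`.
-/

open Matrix

section Hamming

variable {ι : Type*} [Fintype ι]

theorem exists_hammingDist_le_of_hammingDist_le_add {β : ι → Type*} [∀ i, DecidableEq (β i)]
    {x y : ∀ i, β i} {a b : ℕ} (h : hammingDist x y ≤ a + b) :
    ∃ z, hammingDist x z ≤ a ∧ hammingDist z y ≤ b := by
  classical
  set T := Finset.univ.filter fun i => x i ≠ y i
  obtain ⟨S, hST, hS⟩ := Finset.exists_subset_card_eq (min_le_right a T.card)
  refine ⟨fun i => if i ∈ S then y i else x i, ?_, ?_⟩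
  · calc hammingDist x _ ≤ S.card := Finset.card_le_card fun i hi => by
          by_contra hiS
          simp [hiS] at hi
      _ ≤ a := hS ▸ min_le_left _ _
  · have hsub : (Finset.univ.filter fun i => (if i ∈ S then y i else x i) ≠ y i) ⊆ T \ S :=
      fun i hi => by
        by_cases hiS : i ∈ S <;> simp_all [T]
    calc hammingDist _ y ≤ (T \ S).card := Finset.card_le_card hsub
      _ = T.card - min a T.card := by rw [Finset.card_sdiff_of_subset hST, hS]
      _ ≤ b := by change T.card ≤ a + b at h; omega

variable {β : Type*} [AddGroup β] [DecidableEq β] {α σ γ : Type*}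

theorem exists_errorCorrecting_decoder_iff [Nonempty γ] (E : α → ι → β) (s : α → σ) (g : α → γ) (δ : ℕ) :
    (∃ D : (ι → β) → σ → γ, ∀ x ε, hammingNorm ε ≤ δ → D (E x + ε) (s x) = g x) ↔
      ∀ x x', s x = s x' → hammingDist (E x) (E x') ≤ 2 * δ → g x = g x' := by
  classical
  have hball : ∀ x y, hammingDist (E x) y ≤ δ → ∃ ε, hammingNorm ε ≤ δ ∧ E x + ε = y :=
    fun x y hy => ⟨-E x + y, hammingDist_eq_hammingNorm (E x) y ▸ hy, add_neg_cancel_left _ _⟩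
  have hdist_add : ∀ x ε, hammingDist (E x) (E x + ε) = hammingNorm ε := fun x ε => by
    rw [hammingDist_eq_hammingNorm, neg_add_cancel_left]
  constructor
  · rintro ⟨D, hD⟩ x x' hs hdist
    obtain ⟨y, hxy, hyx'⟩ := exists_hammingDist_le_of_hammingDist_le_add (two_mul δ ▸ hdist)
    obtain ⟨ε, hε, rfl⟩ := hball x y hxy
    obtain ⟨ε', hε', hy⟩ := hball x' _ (hammingDist_comm (E x') _ ▸ hyx')
    rw [← hD x ε hε, ← hD x' ε' hε', hy, hs]
  · intro hunique
    refine ⟨fun y t => if h : ∃ x, s x = t ∧ hammingDist (E x) y ≤ δ then g h.choose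
      else Classical.arbitrary γ, fun x ε hε => ?_⟩
    have hx : ∃ x', s x' = s x ∧ hammingDist (E x') (E x + ε) ≤ δ :=
      ⟨x, rfl, by rwa [hdist_add]⟩
    obtain ⟨hs, hdist⟩ := hx.choose_spec
    dsimp only
    rw [dif_pos hx]
    refine hunique _ _ hs ?_
    calc hammingDist (E hx.choose) (E x)
        ≤ hammingDist (E hx.choose) (E x + ε) + hammingDist (E x + ε) (E x) :=
          hammingDist_triangle _ _ _
      _ ≤ δ + δ := by
          rw [hammingDist_comm (E x + ε), hdist_add]
          exact add_le_add hdist hε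
      _ = 2 * δ := (two_mul δ).symm

theorem AddMonoidHom.forall_hammingDist_le_imp_eq_iff [AddGroup α] [AddGroup σ] [AddGroup γ]
    (E : α →+ ι → β) (s : α →+ σ) (g : α →+ γ) (k : ℕ) :
    (∀ x x', s x = s x' → hammingDist (E x) (E x') ≤ k → g x = g x') ↔
      ∀ z, s z = 0 → hammingNorm (E z) ≤ k → g z = 0 := by
  constructor
  · intro h z hs hz
    simpa using h z 0 (by simpa using hs) (by simpa using hz)
  · intro h x x' hs hdist
    rw [hammingDist_eq_hammingNorm, ← map_neg, ← map_add] at hdist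
    rw [← neg_add_eq_zero, ← map_neg, ← map_add]
    exact h _ (by rw [map_add, map_neg, hs, neg_add_cancel]) hdist

end Hamming

theorem ecic_iff_weight_condition_general {m n N : ℕ} {F : Type} [Field F]
    [DecidableEq F]
    (X : Fin m → Finset (Fin n)) (f : Fin m → Fin n)
    (δ : ℕ) (L : Matrix (Fin n) (Fin N) F) :
    (∀ i : Fin m, ∃ D : (Fin N → F) → ({j // j ∈ X i} → F) → F,
        ∀ (x : Fin n → F) (ε : Fin N → F), hammingNorm ε ≤ δ →
          D (vecMul x L + ε) (fun j => x j.1) = x (f i)) ↔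
    (∀ z : Fin n → F, (∃ i : Fin m, (∀ j ∈ X i, z j = 0) ∧ z (f i) ≠ 0) →
        2 * δ + 1 ≤ hammingNorm (vecMul z L)) := by
  have receiver (i : Fin m) : (∃ D : (Fin N → F) → ({j // j ∈ X i} → F) → F,
      ∀ (x : Fin n → F) (ε : Fin N → F), hammingNorm ε ≤ δ →
        D (vecMul x L + ε) (fun j => x j.1) = x (f i)) ↔
      ∀ z : Fin n → F, (∀ j ∈ X i, z j = 0) → hammingNorm (vecMul z L) ≤ 2 * δ → z (f i) = 0 := by
    rw [exists_errorCorrecting_decoder_iff]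
    refine (AddMonoidHom.forall_hammingDist_le_imp_eq_iff (vecMulLinear L).toAddMonoidHom
      (LinearMap.funLeft F F Subtype.val).toAddMonoidHom
      (LinearMap.proj (R := F) (f i)).toAddMonoidHom _).trans ?_
    simp [funext_iff]
  simp only [receiver]
  constructor
  · rintro h z ⟨i, hz, hzf⟩
    by_contra! hw
    exact hzf (h i z hz (by omega))
  · intro h i z hz hw
    by_contra hzf
    have := h z ⟨i, hz, hzf⟩
    omega

/-- An n×N matrix L over F_q corresponds to a δ-error-correcting index
code for the ICSI instance (m,n,X,f) (i.e., every receiver has a decoding function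
recovering x_{f(i)} from the corrupted broadcast and its side information) if and
only if wt(zL) ≥ 2δ+1 for every z with z_{X_i} = 0 and z_{f(i)} ≠ 0 for some i. -/
theorem ecic_iff_weight_condition {m n N : ℕ} {F : Type} [Field F] [Fintype F]
    [DecidableEq F]
    (X : Fin m → Finset (Fin n)) (f : Fin m → Fin n) (hf : ∀ i, f i ∉ X i)
    (δ : ℕ) (L : Matrix (Fin n) (Fin N) F) :
    (∀ i : Fin m, ∃ D : (Fin N → F) → ({j // j ∈ X i} → F) → F,
        ∀ (x : Fin n → F) (ε : Fin N → F), hammingNorm ε ≤ δ →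
          D (vecMul x L + ε) (fun j => x j.1) = x (f i)) ↔
    (∀ z : Fin n → F, (∃ i : Fin m, (∀ j ∈ X i, z j = 0) ∧ z (f i) ≠ 0) →
        2 * δ + 1 ≤ hammingNorm (vecMul z L)) :=
  ecic_iff_weight_condition_general X f δ L
end

section
/- An n×N matrix L over F_q corresponds to a δ-error-correcting index code for the instance described by hypergraph H if and only if for every i ∈ [m], the Hamming distance from the row L_{f(i)} to the linear span M_i of the rows {L_j : j ∈ Y_i} is at least 2δ+1, where Y_i = [n] \ ({f(i)} ∪ X_i). -/
/-! Fix `i` and write `a = f i`. Subtracting from `L a` an element `y ᵥ* L` of the span of the rows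
outside `X i ∪ {a}` gives `z ᵥ* L` with `z = e_a - y`, which vanishes on `X i` and has `z a = 1`;
conversely every such `z` arises this way, and every admissible `z` is a nonzero multiple of one
with `z a = 1`, which does not change the weight of `z ᵥ* L`. -/

open Matrix

section RowSpan

variable {ι κ R : Type*} [Fintype ι]

theorem Matrix.mem_span_image_rows_iff [Semiring R] (L : Matrix ι κ R) (s : Set ι)
    (v : κ → R) :
    v ∈ Submodule.span R (L '' s) ↔ ∃ y : ι → R, (∀ j ∉ s, y j = 0) ∧ y ᵥ* L = v := by
  constructor
  · intro hv
    obtain ⟨l, hl, rfl⟩ := (Finsupp.mem_span_image_iff_linearCombination R).mp hv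
    refine ⟨l, fun j hj => Finsupp.notMem_support_iff.mp fun h => hj (hl h), ?_⟩
    rw [vecMul_eq_sum]
    exact ((Finsupp.linearCombination_apply R l).trans
      (Finsupp.sum_fintype _ _ fun j => zero_smul R (L j))).symm
  · rintro ⟨y, hy, rfl⟩
    rw [vecMul_eq_sum]
    refine Submodule.sum_mem _ fun j _ => ?_
    by_cases hj : j ∈ s
    · exact Submodule.smul_mem _ _ (Submodule.subset_span ⟨j, hj, rfl⟩)
    · simp [hy j hj]

theorem Matrix.forall_le_hammingNorm_vecMul_iff_of_apply_eq_one [Field R] [DecidableEq R]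
    [Fintype κ] (L : Matrix ι κ R) (X : Finset ι) (a : ι) (d : ℕ) :
    (∀ z : ι → R, (∀ j ∈ X, z j = 0) → z a ≠ 0 → d ≤ hammingNorm (z ᵥ* L)) ↔
      ∀ z : ι → R, (∀ j ∈ X, z j = 0) → z a = 1 → d ≤ hammingNorm (z ᵥ* L) := by
  refine ⟨fun h z hzX hza => h z hzX (hza ▸ one_ne_zero), fun h z hzX hza => ?_⟩
  have hreg : IsSMulRegular R (z a)⁻¹ := (IsRegular.of_ne_zero (inv_ne_zero hza)).left
  have := h ((z a)⁻¹ • z) (fun j hj => by simp [hzX j hj]) (inv_mul_cancel₀ hza)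
  rwa [smul_vecMul, hammingNorm_smul fun _ => hreg] at this

variable [DecidableEq ι]

theorem Matrix.exists_sub_mem_span_iff [Ring R] (L : Matrix ι κ R) {X : Finset ι} {a : ι}
    (ha : a ∉ X) (w : κ → R) :
    (∃ v ∈ Submodule.span R (L '' {j | j ≠ a ∧ j ∉ X}), L a - v = w) ↔
      ∃ z : ι → R, (∀ j ∈ X, z j = 0) ∧ z a = 1 ∧ z ᵥ* L = w := by
  simp only [mem_span_image_rows_iff]
  constructor
  · rintro ⟨-, ⟨y, hy, rfl⟩, rfl⟩
    refine ⟨Pi.single a 1 - y, fun j hj => ?_, ?_, by rw [sub_vecMul, single_one_vecMul]; rfl⟩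
    · have hja : j ≠ a := fun h => ha (h ▸ hj)
      simp [hja, hy j (by simp [hj])]
    · simp [hy a (by simp)]
  · rintro ⟨z, hzX, hza, rfl⟩
    refine ⟨_, ⟨Pi.single a 1 - z, fun j hj => ?_, rfl⟩, ?_⟩
    · by_cases hja : j = a
      · simp [hja, hza]
      · simp [hja, hzX j (by simpa [hja] using hj)]
    · rw [sub_vecMul, single_one_vecMul]
      exact sub_sub_cancel _ _

theorem Matrix.forall_le_hammingNorm_vecMul_iff_forall_le_hammingDist_span [Field R]
    [DecidableEq R] [Fintype κ] (L : Matrix ι κ R) {X : Finset ι} {a : ι} (ha : a ∉ X) (d : ℕ) :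
    (∀ z : ι → R, (∀ j ∈ X, z j = 0) → z a ≠ 0 → d ≤ hammingNorm (z ᵥ* L)) ↔
      ∀ v ∈ Submodule.span R (L '' {j | j ≠ a ∧ j ∉ X}), d ≤ hammingDist (L a) v := by
  simp_rw [forall_le_hammingNorm_vecMul_iff_of_apply_eq_one, hammingDist_comm (L a),
    hammingDist_eq_hammingNorm, neg_add_eq_sub]
  constructor
  · intro h v hv
    obtain ⟨z, hzX, hza, hz⟩ := (exists_sub_mem_span_iff L ha _).mp ⟨v, hv, rfl⟩
    exact hz ▸ h z hzX hza
  · intro h z hzX hza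
    obtain ⟨v, hv, hz⟩ := (exists_sub_mem_span_iff L ha _).mpr ⟨z, hzX, hza, rfl⟩
    exact hz ▸ h v hv

end RowSpan

theorem ecic_iff_dist_to_span_general {m n N : ℕ} {F : Type} [Field F]
    [DecidableEq F]
    (X : Fin m → Finset (Fin n)) (f : Fin m → Fin n) (hf : ∀ i, f i ∉ X i)
    (δ : ℕ) (L : Matrix (Fin n) (Fin N) F) :
    (∀ z : Fin n → F, (∃ i : Fin m, (∀ j ∈ X i, z j = 0) ∧ z (f i) ≠ 0) →
        2 * δ + 1 ≤ hammingNorm (vecMul z L)) ↔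
    (∀ i : Fin m, ∀ v ∈ Submodule.span F
        (L '' {j : Fin n | j ≠ f i ∧ j ∉ X i}),
      2 * δ + 1 ≤ hammingDist (L (f i)) v) := by
  refine ⟨fun h i => ?_, fun h z ⟨i, hzX, hza⟩ => ?_⟩
  · exact (forall_le_hammingNorm_vecMul_iff_forall_le_hammingDist_span L (hf i) _).mp
      fun z hzX hza => h z ⟨i, hzX, hza⟩
  · exact (forall_le_hammingNorm_vecMul_iff_forall_le_hammingDist_span L (hf i) _).mpr
      (h i) z hzX hza

/-- L corresponds to a (δ,H)-ECIC (characterized by the weight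
condition) iff for every i, the Hamming distance from the row L_{f(i)} to the
span M_i of the rows {L_j : j ∈ Y_i}, Y_i = [n] \ ({f(i)} ∪ X_i), is ≥ 2δ+1. -/
theorem ecic_iff_dist_to_span {m n N : ℕ} {F : Type} [Field F] [Fintype F]
    [DecidableEq F]
    (X : Fin m → Finset (Fin n)) (f : Fin m → Fin n) (hf : ∀ i, f i ∉ X i)
    (δ : ℕ) (L : Matrix (Fin n) (Fin N) F) :
    (∀ z : Fin n → F, (∃ i : Fin m, (∀ j ∈ X i, z j = 0) ∧ z (f i) ≠ 0) →
        2 * δ + 1 ≤ hammingNorm (vecMul z L)) ↔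
    (∀ i : Fin m, ∀ v ∈ Submodule.span F
        (L '' {j : Fin n | j ≠ f i ∧ j ∉ X i}),
      2 * δ + 1 ≤ hammingDist (L (f i)) v) :=
  ecic_iff_dist_to_span_general X f hf δ L
end

section
/- Let a = α(H) be the generalized independence number of the side information hypergraph H. If there exists a linear δ-error-correcting index code over F_q of length N for the instance described by H, then there exists a linear code over F_q of length N, dimension a, and minimum Hamming distance at least 2δ+1. Consequently the optimal length N_q(H,δ) satisfies N_q(H,δ) ≥ N_q[α(H), 2δ+1], where N_q[k,d] is the shortest length of a linear code of dimension k and minimum distance d. -/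
open Matrix

/-- The collection J(H): sets of the form {f(i)} ∪ Y with Y ⊆ Y_i = [n]\({f(i)} ∪ X_i). -/
def inJ {m n : ℕ} (X : Fin m → Finset (Fin n)) (f : Fin m → Fin n)
    (K : Finset (Fin n)) : Prop :=
  ∃ i : Fin m, f i ∈ K ∧ ∀ j ∈ K, j ≠ f i → j ∉ X i

/-- A generalized independent set: every nonempty subset belongs to J(H). -/
def GenIndep {m n : ℕ} (X : Fin m → Finset (Fin n)) (f : Fin m → Fin n)
    (S : Finset (Fin n)) : Prop :=
  ∀ K ⊆ S, K.Nonempty → inJ X f K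

/-- L corresponds to a (δ,H)-ECIC. -/
def IsECIC {m n N : ℕ} {F : Type} [Field F] [DecidableEq F]
    (X : Fin m → Finset (Fin n)) (f : Fin m → Fin n) (δ : ℕ)
    (L : Matrix (Fin n) (Fin N) F) : Prop :=
  ∀ z : Fin n → F, (∃ i : Fin m, (∀ j ∈ X i, z j = 0) ∧ z (f i) ≠ 0) →
    2 * δ + 1 ≤ hammingNorm (vecMul z L)

open Function

lemma Matrix.vecMul_submatrix_of_injective {κ ι ν R : Type*} [Fintype κ] [Fintype ι]
    [NonUnitalNonAssocSemiring R] {e : κ → ι} (he : Injective e) (u : κ → R)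
    (L : Matrix ι ν R) :
    u ᵥ* L.submatrix e id = extend e u 0 ᵥ* L := by
  ext j
  refine Fintype.sum_of_injective e he _ _ (fun x hx => ?_) (fun k => ?_)
  · simp [extend_apply' u (0 : ι → R) x hx]
  · simp [he.extend_apply]

lemma GenIndep.exists_receiver {m n : ℕ} {M : Type*} [Zero M]
    {X : Fin m → Finset (Fin n)} {f : Fin m → Fin n} (hf : ∀ i, f i ∉ X i)
    {S : Finset (Fin n)} (hS : GenIndep X f S) {z : Fin n → M}
    (hzS : ∀ j, z j ≠ 0 → j ∈ S) (hz : z ≠ 0) :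
    ∃ i : Fin m, (∀ j ∈ X i, z j = 0) ∧ z (f i) ≠ 0 := by
  classical
  set K := Finset.univ.filter (fun j => z j ≠ 0)
  have hKS : K ⊆ S := fun j hj => hzS j (Finset.mem_filter.mp hj).2
  have hKne : K.Nonempty := by
    obtain ⟨j, hj⟩ := ne_iff.mp hz
    exact ⟨j, Finset.mem_filter.mpr ⟨Finset.mem_univ j, hj⟩⟩
  obtain ⟨i, hfi, hXi⟩ := hS K hKS hKne
  refine ⟨i, fun j hj => ?_, (Finset.mem_filter.mp hfi).2⟩
  by_contra hzj
  exact hXi j (Finset.mem_filter.mpr ⟨Finset.mem_univ j, hzj⟩) 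
    (ne_of_mem_of_not_mem hj (hf i)) hj

/-- `u ᵥ* G` is the ECIC encoding of `u` extended by zero off `S`, and `GenIndep` provides a
receiver that demands a nonzero symbol of that message while all its side information vanishes. -/
theorem IsECIC.exists_code_of_genIndep {m n N : ℕ} {F : Type} [Field F] [DecidableEq F]
    {X : Fin m → Finset (Fin n)} {f : Fin m → Fin n} (hf : ∀ i, f i ∉ X i) {δ : ℕ}
    {L : Matrix (Fin n) (Fin N) F} (hL : IsECIC X f δ L)
    {S : Finset (Fin n)} (hS : GenIndep X f S) :
    ∃ G : Matrix (Fin S.card) (Fin N) F,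
      ∀ u : Fin S.card → F, u ≠ 0 → 2 * δ + 1 ≤ hammingNorm (u ᵥ* G) := by
  let e := S.orderEmbOfFin rfl
  refine ⟨L.submatrix e id, fun u hu => ?_⟩
  rw [Matrix.vecMul_submatrix_of_injective e.injective]
  refine hL _ (hS.exists_receiver hf (fun j hj => ?_) ?_)
  · obtain ⟨k, rfl⟩ : j ∈ Set.range e :=
      by_contra fun h => hj (extend_apply' u (0 : Fin n → F) j h)
    exact S.orderEmbOfFin_mem rfl k
  · obtain ⟨k, hk⟩ := ne_iff.mp hu
    exact ne_iff.mpr ⟨e k, by simpa [e.injective.extend_apply] using hk⟩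

lemma sSup_card_genIndep_mem {m n : ℕ} (X : Fin m → Finset (Fin n)) (f : Fin m → Fin n) :
    sSup {k : ℕ | ∃ S : Finset (Fin n), S.card = k ∧ GenIndep X f S} ∈
      {k : ℕ | ∃ S : Finset (Fin n), S.card = k ∧ GenIndep X f S} := by
  refine Nat.sSup_mem ⟨0, ∅, Finset.card_empty, fun K hK hKne => ?_⟩ ⟨n, ?_⟩
  · exact absurd (Finset.subset_empty.mp hK ▸ hKne) Finset.not_nonempty_empty
  · rintro k ⟨S, rfl, -⟩
    simpa using S.card_le_univ

theorem alpha_bound_general {m n N : ℕ} {F : Type} [Field F] [DecidableEq F]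
    (X : Fin m → Finset (Fin n)) (f : Fin m → Fin n) (hf : ∀ i, f i ∉ X i)
    (δ a : ℕ)
    (ha : a = sSup {k : ℕ | ∃ S : Finset (Fin n), S.card = k ∧ GenIndep X f S})
    (L : Matrix (Fin n) (Fin N) F) (hL : IsECIC X f δ L) :
    (∃ G : Matrix (Fin a) (Fin N) F,
        ∀ u : Fin a → F, u ≠ 0 → 2 * δ + 1 ≤ hammingNorm (vecMul u G)) ∧
    sInf {N' : ℕ | ∃ G : Matrix (Fin a) (Fin N') F,
          ∀ u : Fin a → F, u ≠ 0 → 2 * δ + 1 ≤ hammingNorm (vecMul u G)} ≤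
      sInf {N' : ℕ | ∃ L' : Matrix (Fin n) (Fin N') F, IsECIC X f δ L'} := by
  obtain ⟨S, rfl, hS⟩ := ha ▸ sSup_card_genIndep_mem X f
  obtain ⟨L', hL'⟩ := Nat.sInf_mem (s := {N' | ∃ L' : Matrix (Fin n) (Fin N') F, IsECIC X f δ L'})
    ⟨N, L, hL⟩
  exact ⟨hL.exists_code_of_genIndep hf hS, Nat.sInf_le (hL'.exists_code_of_genIndep hf hS)⟩

/-- α-bound: if a = α(H) and L is a linear (δ,H)-ECIC of length N,
then there is a linear [N, a, ≥ 2δ+1]_q code; consequently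
N_q(H,δ) ≥ N_q[α(H), 2δ+1]. -/
theorem alpha_bound {m n N : ℕ} {F : Type} [Field F] [Fintype F] [DecidableEq F]
    (X : Fin m → Finset (Fin n)) (f : Fin m → Fin n) (hf : ∀ i, f i ∉ X i)
    (δ a : ℕ)
    (ha : a = sSup {k : ℕ | ∃ S : Finset (Fin n), S.card = k ∧ GenIndep X f S})
    (L : Matrix (Fin n) (Fin N) F) (hL : IsECIC X f δ L) :
    (∃ G : Matrix (Fin a) (Fin N) F,
        ∀ u : Fin a → F, u ≠ 0 → 2 * δ + 1 ≤ hammingNorm (vecMul u G)) ∧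
    sInf {N' : ℕ | ∃ G : Matrix (Fin a) (Fin N') F,
          ∀ u : Fin a → F, u ≠ 0 → 2 * δ + 1 ≤ hammingNorm (vecMul u G)} ≤
      sInf {N' : ℕ | ∃ L' : Matrix (Fin n) (Fin N') F, IsECIC X f δ L'} :=
  alpha_bound_general X f hf δ a ha L hL
end

section
/- If a matrix L corresponds to a δ-error-correcting index code over F_q for instance H, then the matrix L' obtained from L by deleting any 2δ columns corresponds to a (0-error-correcting) index code for H. -/
open Matrix

theorem hammingNorm_le_hammingNorm_restrict_add_card {ι : Type*} [Fintype ι] [DecidableEq ι]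
    {β : ι → Type*} [∀ i, Zero (β i)] [∀ i, DecidableEq (β i)] (w : ∀ i, β i) (S : Finset ι) :
    hammingNorm w ≤ hammingNorm (fun j : {j // j ∉ S} => w j) + S.card := by
  have hsupp : ({j | w j ≠ 0} : Finset ι) ⊆
      ({j : {j // j ∉ S} | w j ≠ 0} : Finset _).map (Function.Embedding.subtype _) ∪ S := by
    intro j hj
    by_cases hjS : j ∈ S
    · exact Finset.mem_union_right _ hjS
    · exact Finset.mem_union_left _ (Finset.mem_map.mpr ⟨⟨j, hjS⟩, by simpa using hj, rfl⟩)
  calc hammingNorm w ≤ _ := Finset.card_le_card hsupp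
    _ ≤ _ := Finset.card_union_le _ _
    _ = hammingNorm (fun j : {j // j ∉ S} => w j) + S.card := by
      rw [Finset.card_map]; rfl

theorem delete_columns_index_code_general {m n N : ℕ} {F : Type} [Field F]
    [DecidableEq F]
    (X : Fin m → Finset (Fin n)) (f : Fin m → Fin n)
    (δ : ℕ) (L : Matrix (Fin n) (Fin N) F)
    (hL : ∀ z : Fin n → F, (∃ i : Fin m, (∀ j ∈ X i, z j = 0) ∧ z (f i) ≠ 0) →
      2 * δ + 1 ≤ hammingNorm (vecMul z L))
    (S : Finset (Fin N)) (hS : S.card = 2 * δ) :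
    ∀ z : Fin n → F, (∃ i : Fin m, (∀ j ∈ X i, z j = 0) ∧ z (f i) ≠ 0) →
      1 ≤ hammingNorm (vecMul z (fun i (j : {j : Fin N // j ∉ S}) => L i j.1)) := by
  intro z hz
  have hweight := hL z hz
  have hdelete := hammingNorm_le_hammingNorm_restrict_add_card (vecMul z L) S
  -- the columns of the product with the shortened matrix are the surviving columns of `vecMul z L`
  change 1 ≤ hammingNorm (fun j : {j // j ∉ S} => vecMul z L j)
  omega

/-- deleting any 2δ columns from a (δ,H)-ECIC matrix yields a matrix
corresponding to an ordinary (0-error-correcting) index code for H. -/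
theorem delete_columns_index_code {m n N : ℕ} {F : Type} [Field F] [Fintype F]
    [DecidableEq F]
    (X : Fin m → Finset (Fin n)) (f : Fin m → Fin n) (hf : ∀ i, f i ∉ X i)
    (δ : ℕ) (L : Matrix (Fin n) (Fin N) F)
    (hL : ∀ z : Fin n → F, (∃ i : Fin m, (∀ j ∈ X i, z j = 0) ∧ z (f i) ≠ 0) →
      2 * δ + 1 ≤ hammingNorm (vecMul z L))
    (S : Finset (Fin N)) (hS : S.card = 2 * δ) :
    ∀ z : Fin n → F, (∃ i : Fin m, (∀ j ∈ X i, z j = 0) ∧ z (f i) ≠ 0) →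
      1 ≤ hammingNorm (vecMul z (fun i (j : {j : Fin N // j ∉ S}) => L i j.1)) :=
  delete_columns_index_code_general X f δ L hL S hS
end

section
/- (κ-bound) If G is an n×κ matrix corresponding to a linear index code for H (κ = κ_q(H)) and M is a generator matrix of a linear [N, κ, 2δ+1]_q code, then the matrix L = GM corresponds to a δ-error-correcting index code for H. Consequently, N_q(H,δ) ≤ N_q[κ_q(H), 2δ+1]. -/
/-!
An index code `G` sends every vector `z` of `I(q,H)` to a nonzero message `zG`, and a code of
minimum distance `2δ+1` turns a nonzero message into a word of weight at least `2δ+1`, so `GM`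
corrects `δ` errors. Composing with `G` therefore maps codes to error-correcting index codes of
the same length. The repetition code shows that codes of every distance exist, so the infimum
on the right is taken over a nonempty set.
-/

open Matrix

/-- The min-rank κ_q(H) of the side information hypergraph over the field F. -/
noncomputable def minrank (F : Type) [Field F] {m n : ℕ}
    (X : Fin m → Finset (Fin n)) (f : Fin m → Fin n) : ℕ :=
  sInf {r : ℕ | ∃ v : Fin m → (Fin n → F),
    (∀ i, Function.support (v i) ⊆ (X i : Set (Fin n))) ∧
    Module.finrank F (Submodule.span F
      (Set.range fun i => v i + Pi.single (f i) (1 : F))) = r}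

def HasMinDistAtLeast {κ ι F : Type} [Fintype κ] [Fintype ι] [Field F] [DecidableEq F]
    (M : Matrix κ ι F) (d : ℕ) : Prop :=
  ∀ u : κ → F, u ≠ 0 → d ≤ hammingNorm (vecMul u M)

lemma hammingNorm_comp_equiv {ι κ β : Type*} [Fintype ι] [Fintype κ] [Zero β] [DecidableEq β]
    (x : ι → β) (e : κ ≃ ι) : hammingNorm (x ∘ e) = hammingNorm x :=
  Finset.card_equiv e (by simp)

lemma hammingNorm_comp_fst {ι κ β : Type*} [Fintype ι] [Fintype κ] [Zero β] [DecidableEq β]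
    (x : ι → β) : hammingNorm (fun p : ι × κ => x p.1) = hammingNorm x * Fintype.card κ := by
  rw [hammingNorm, hammingNorm, ← Finset.univ_product_univ,
    Finset.filter_product_left (fun i => x i ≠ 0), Finset.card_product, Finset.card_univ]

lemma HasMinDistAtLeast.submatrix_equiv {κ ι ι' F : Type} [Fintype κ] [Fintype ι] [Fintype ι']
    [Field F] [DecidableEq F] {M : Matrix κ ι F} {d : ℕ} (hM : HasMinDistAtLeast M d)
    (e : ι' ≃ ι) : HasMinDistAtLeast (M.submatrix id e) d := by
  intro u hu
  change d ≤ hammingNorm (vecMul u M ∘ e)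
  rw [hammingNorm_comp_equiv]
  exact hM u hu

def repetitionMatrix (F ι κ : Type) [Field F] [DecidableEq ι] : Matrix ι (ι × κ) F :=
  of fun i p => if p.1 = i then 1 else 0

lemma vecMul_repetitionMatrix {F ι κ : Type} [Field F] [Fintype ι] [DecidableEq ι] (u : ι → F) :
    vecMul u (repetitionMatrix F ι κ) = fun p => u p.1 := by
  ext p
  simp [repetitionMatrix, vecMul, dotProduct]

lemma hasMinDistAtLeast_repetitionMatrix (F ι κ : Type) [Field F] [DecidableEq F] [Fintype ι]
    [DecidableEq ι] [Fintype κ] :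
    HasMinDistAtLeast (repetitionMatrix F ι κ) (Fintype.card κ) := by
  intro u hu
  rw [vecMul_repetitionMatrix, hammingNorm_comp_fst]
  exact Nat.le_mul_of_pos_left _ (hammingNorm_pos_iff.mpr hu)

lemma exists_hasMinDistAtLeast (F : Type) [Field F] [DecidableEq F] (k d : ℕ) :
    ∃ M : Matrix (Fin k) (Fin (k * d)) F, HasMinDistAtLeast M d := by
  have hrep := hasMinDistAtLeast_repetitionMatrix F (Fin k) (Fin d)
  rw [Fintype.card_fin] at hrep
  exact ⟨_, hrep.submatrix_equiv finProdFinEquiv.symm⟩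

lemma IsECIC.mul {m n k N : ℕ} {F : Type} [Field F] [DecidableEq F]
    {X : Fin m → Finset (Fin n)} {f : Fin m → Fin n} {δ : ℕ} {G : Matrix (Fin n) (Fin k) F}
    (hG : IsECIC X f 0 G) {M : Matrix (Fin k) (Fin N) F} (hM : HasMinDistAtLeast M (2 * δ + 1)) :
    IsECIC X f δ (G * M) := by
  intro z hz
  rw [← vecMul_vecMul]
  exact hM _ (hammingNorm_pos_iff.mp (hG z hz))

theorem kappa_bound_general {m n N : ℕ} {F : Type} [Field F] [DecidableEq F]
    (X : Fin m → Finset (Fin n)) (f : Fin m → Fin n)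
    (δ k : ℕ)
    (G : Matrix (Fin n) (Fin k) F) (hG : IsECIC X f 0 G)
    (M : Matrix (Fin k) (Fin N) F)
    (hM : ∀ u : Fin k → F, u ≠ 0 → 2 * δ + 1 ≤ hammingNorm (vecMul u M)) :
    IsECIC X f δ (G * M) ∧
    sInf {N' : ℕ | ∃ L' : Matrix (Fin n) (Fin N') F, IsECIC X f δ L'} ≤
      sInf {N' : ℕ | ∃ M' : Matrix (Fin k) (Fin N') F,
        ∀ u : Fin k → F, u ≠ 0 → 2 * δ + 1 ≤ hammingNorm (vecMul u M')} := by
  refine ⟨hG.mul hM, csInf_le_csInf (OrderBot.bddBelow _)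
    ⟨_, exists_hasMinDistAtLeast F k (2 * δ + 1)⟩ ?_⟩
  rintro N' ⟨M', hM'⟩
  exact ⟨G * M', hG.mul hM'⟩

/-- κ-bound: if G is an n×κ matrix corresponding to a linear index
code for H (κ = κ_q(H)) and M generates an [N,κ,≥2δ+1]_q code, then L = G*M is a
(δ,H)-ECIC; consequently N_q(H,δ) ≤ N_q[κ_q(H), 2δ+1]. -/
theorem kappa_bound {m n N : ℕ} {F : Type} [Field F] [Fintype F] [DecidableEq F]
    (X : Fin m → Finset (Fin n)) (f : Fin m → Fin n) (hf : ∀ i, f i ∉ X i)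
    (δ k : ℕ) (hk : k = minrank F X f)
    (G : Matrix (Fin n) (Fin k) F) (hG : IsECIC X f 0 G)
    (M : Matrix (Fin k) (Fin N) F)
    (hM : ∀ u : Fin k → F, u ≠ 0 → 2 * δ + 1 ≤ hammingNorm (vecMul u M)) :
    IsECIC X f δ (G * M) ∧
    sInf {N' : ℕ | ∃ L' : Matrix (Fin n) (Fin N') F, IsECIC X f δ L'} ≤
      sInf {N' : ℕ | ∃ M' : Matrix (Fin k) (Fin N') F,
        ∀ u : Fin k → F, u ≠ 0 → 2 * δ + 1 ≤ hammingNorm (vecMul u M')} :=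
  kappa_bound_general X f δ k G hG M hM
end

section
/- (MDS error-correcting index codes) If q ≥ κ_q(H) + 2δ - 1, then the optimal length of a linear δ-error-correcting index code over F_q equals κ_q(H) + 2δ. -/
/-!
Lower bound: deleting any `2δ` columns of a `δ`-error-correcting index code `L` leaves an index
code, since a decodable `z` has `z L` of weight `> 2δ`. For an index code, duality turns
"`z` vanishes on `X i` and is orthogonal to the columns of `L` ⇒ `z (f i) = 0`" into
`e (f i) ∈ colspace L + span {e j | j ∈ X i}`, which yields a min-rank witness inside the column
space; hence `κ ≤ N - 2δ`.

Upper bound: let the columns of `B` span the space of an optimal min-rank witness and let `G`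
generate the doubly extended Reed–Solomon code of length `κ + 2δ ≤ q + 1` (polynomials of degree
`< κ` evaluated on the projective line), which has minimum distance `2δ + 1`. A decodable `z` is not
orthogonal to the witness space, so `z B ≠ 0` and `z B G` has weight `≥ 2δ + 1`.
-/

open Matrix

open Finset Polynomial

section LinearAlgebra

variable {ι F : Type*} [Fintype ι] [Field F]

theorem hammingNorm_le_card_sub_card {β : Type*} [Zero β] [DecidableEq β] {u : ι → β}
    (S : Finset ι) (hS : ∀ k ∈ S, u k = 0) : hammingNorm u ≤ Fintype.card ι - S.card := by
  classical
  rw [← Finset.card_compl]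
  exact Finset.card_le_card fun k hk =>
    Finset.mem_compl.2 fun hkS => (Finset.mem_filter.1 hk).2 (hS k hkS)

theorem dotProduct_eq_zero_of_support_subset {R : Type*} [NonUnitalNonAssocSemiring R]
    {s : Finset ι} {z v : ι → R}
    (hz : ∀ j ∈ s, z j = 0) (hv : Function.support v ⊆ s) : z ⬝ᵥ v = 0 :=
  Finset.sum_eq_zero fun j _ => by
    by_cases hvj : v j = 0
    · simp [hvj]
    · simp [hz j (hv hvj)]

theorem Module.Dual.apply_eq_dotProduct {R : Type*} [CommSemiring R] [DecidableEq ι]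
    (φ : Module.Dual R (ι → R)) (u : ι → R) : φ u = (fun j => φ (Pi.single j 1)) ⬝ᵥ u := by
  conv_lhs => rw [← Finset.univ_sum_single u]
  rw [map_sum, dotProduct]
  refine Finset.sum_congr rfl fun j _ => ?_
  rw [mul_comm, ← smul_eq_mul, ← map_smul, ← Pi.single_smul', smul_eq_mul, mul_one]

theorem exists_support_subset_add_single_mem [DecidableEq ι] (C : Submodule F (ι → F))
    (s : Finset ι) (j₀ : ι)
    (h : ∀ z : ι → F, (∀ j ∈ s, z j = 0) → (∀ u ∈ C, z ⬝ᵥ u = 0) → z j₀ = 0) :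
    ∃ v : ι → F, Function.support v ⊆ s ∧ v + Pi.single j₀ 1 ∈ C := by
  let V : Submodule F (ι → F) := Submodule.pi (↑s)ᶜ fun _ => ⊥
  suffices Pi.single j₀ 1 ∈ C ⊔ V by
    obtain ⟨u, hu, v, hv, huv⟩ := Submodule.mem_sup.1 this
    refine ⟨-v, fun j hj => ?_, by rwa [← huv, neg_add_eq_sub, add_sub_cancel_right]⟩
    by_contra hjs
    exact hj (by simpa using (Submodule.mem_pi.1 hv) j hjs)
  by_contra hnot
  obtain ⟨φ, hφ, hφCV⟩ := Submodule.exists_dual_map_eq_bot_of_notMem hnot inferInstance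
  have hφ0 : ∀ u ∈ C ⊔ V, φ u = 0 := fun u hu =>
    (Submodule.mem_bot F).1 (hφCV ▸ Submodule.mem_map_of_mem hu)
  refine hφ (h (fun j => φ (Pi.single j 1)) (fun j hj => hφ0 _ (Submodule.mem_sup_right ?_))
    fun u hu => ?_)
  · refine Submodule.mem_pi.2 fun k hk => ?_
    simp [Pi.single_eq_of_ne (ne_of_mem_of_not_mem hj hk).symm]
  · rw [← φ.apply_eq_dotProduct]
    exact hφ0 u (Submodule.mem_sup_left hu)

theorem exists_matrix_range_mulVecLin_eq {k : ℕ} (W : Submodule F (ι → F))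
    (hW : Module.finrank F W = k) : ∃ B : Matrix ι (Fin k) F, LinearMap.range B.mulVecLin = W := by
  let b := Module.finBasisOfFinrankEq F W hW
  refine ⟨Matrix.of fun j t => (b t : ι → F) j, ?_⟩
  rw [Matrix.range_mulVecLin]
  have : Set.range (Matrix.of fun j t => (b t : ι → F) j).col = W.subtype '' Set.range b := by
    rw [← Set.range_comp]; rfl
  rw [this, Submodule.span_image, b.span_eq, Submodule.map_subtype_top]

end LinearAlgebra

section ProjectiveEvaluation

variable {F : Type*} [Field F]

/-- A polynomial of degree `< k`, read as a binary form of degree `k - 1`, evaluated at a point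
of the projective line `Option F`; at the point at infinity `none` its value is the coefficient
of `X ^ (k - 1)`. -/
def projectiveEval (k : ℕ) : Option F → F[X] →ₗ[F] F
  | none => lcoeff F (k - 1)
  | some x => leval x

variable [Fintype F] [DecidableEq F]

theorem card_filter_projectiveEval_eq_zero_le {k : ℕ} {p : F[X]} (hp0 : p ≠ 0)
    (hpk : p.natDegree < k) : #{x : Option F | projectiveEval k x p = 0} ≤ k - 1 := by
  have hcard : #{x : Option F | projectiveEval k x p = 0} =
      (if p.coeff (k - 1) = 0 then 1 else 0) + #{x : F | p.eval x = 0} := by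
    simp only [card_filter, Fintype.sum_option]
    rfl
  have hroots : #{x : F | p.eval x = 0} ≤ p.natDegree :=
    card_le_degree_of_subset_roots fun x hx => (mem_roots hp0).2 (by simpa using hx)
  have hlead : p.coeff (k - 1) = 0 → p.natDegree ≠ k - 1 := fun h hdeg =>
    leadingCoeff_ne_zero.2 hp0 (by rwa [leadingCoeff, hdeg])
  split_ifs at hcard with h
  · have := hlead h
    omega
  · omega

theorem card_add_one_sub_le_hammingNorm_projectiveEval {ι : Type*} [Fintype ι]
    (a : ι ↪ Option F) {k : ℕ} {p : F[X]} (hp0 : p ≠ 0) (hpk : p.natDegree < k) :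
    Fintype.card ι + 1 - k ≤ hammingNorm fun j => projectiveEval k (a j) p := by
  have hzeros : #{j | projectiveEval k (a j) p = 0} ≤ k - 1 :=
    (card_le_card_of_injOn a (fun j hj => by simpa using hj) a.injective.injOn).trans
      (card_filter_projectiveEval_eq_zero_le hp0 hpk)
  have hsplit := card_filter_add_card_filter_not (s := univ) fun j => projectiveEval k (a j) p = 0
  rw [card_univ] at hsplit
  change _ ≤ #{j | ¬projectiveEval k (a j) p = 0}
  omega

theorem exists_mds_generatorMatrix {ι : Type*} [Fintype ι] (k : ℕ)
    (hι : Fintype.card ι ≤ Fintype.card F + 1) :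
    ∃ G : Matrix (Fin k) ι F, ∀ c ≠ 0, Fintype.card ι + 1 - k ≤ hammingNorm (c ᵥ* G) := by
  obtain ⟨a⟩ := Function.Embedding.nonempty_of_card_le (β := Option F) (by simpa using hι)
  let encode : (Fin k → F) →ₗ[F] ι → F := LinearMap.pi fun j =>
    projectiveEval k (a j) ∘ₗ (degreeLT F k).subtype ∘ₗ (degreeLTEquiv F k).symm.toLinearMap
  refine ⟨(LinearMap.toMatrix' encode)ᵀ, fun c hc => ?_⟩
  set p : F[X] := ((degreeLTEquiv F k).symm c : F[X])
  have hp0 : p ≠ 0 := by simpa [p] using hc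
  have hpk : p.natDegree < k :=
    (natDegree_lt_iff_degree_lt hp0).2 (mem_degreeLT.1 ((degreeLTEquiv F k).symm c).2)
  rw [vecMul_transpose, LinearMap.toMatrix'_mulVec]
  exact card_add_one_sub_le_hammingNorm_projectiveEval a hp0 hpk

end ProjectiveEvaluation

section IndexCoding

variable {m n : ℕ} {F : Type} [Field F] (X : Fin m → Finset (Fin n)) (f : Fin m → Fin n)

theorem exists_finrank_eq_minrank :
    ∃ v : Fin m → Fin n → F, (∀ i, Function.support (v i) ⊆ X i) ∧
      Module.finrank F (Submodule.span F (Set.range fun i => v i + Pi.single (f i) 1)) =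
        minrank F X f :=
  (Nat.sInf_mem ⟨_, fun _ => 0, fun _ => by simp, rfl⟩ : minrank F X f ∈ _)

theorem minrank_le_finrank (C : Submodule F (Fin n → F))
    (hC : ∀ i, ∃ v : Fin n → F, Function.support v ⊆ X i ∧ v + Pi.single (f i) 1 ∈ C) :
    minrank F X f ≤ Module.finrank F C := by
  choose v hv hvC using hC
  calc minrank F X f
      ≤ Module.finrank F (Submodule.span F (Set.range fun i => v i + Pi.single (f i) 1)) :=
        Nat.sInf_le ⟨v, hv, rfl⟩
    _ ≤ Module.finrank F C :=
        Submodule.finrank_mono (Submodule.span_le.2 (Set.range_subset_iff.2 hvC))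

theorem minrank_le_card_of_vecMul_ne_zero {ι : Type} [Fintype ι] (L : Matrix (Fin n) ι F)
    (hL : ∀ z i, (∀ j ∈ X i, z j = 0) → z (f i) ≠ 0 → z ᵥ* L ≠ 0) :
    minrank F X f ≤ Fintype.card ι := by
  classical
  refine (minrank_le_finrank X f (LinearMap.range L.mulVecLin) fun i =>
    exists_support_subset_add_single_mem _ _ _ fun z hz hzC => ?_).trans
      ((LinearMap.finrank_range_le _).trans (Module.finrank_fintype_fun_eq_card F).le)
  by_contra hzf
  refine hL z i hz hzf (funext fun k => ?_)
  have := hzC _ ⟨Pi.single k 1, rfl⟩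
  rwa [Matrix.mulVecLin_apply, dotProduct_mulVec, dotProduct_single, mul_one] at this

variable [DecidableEq F]

theorem isECIC_mul {k N : ℕ} (δ : ℕ) (B : Matrix (Fin n) (Fin k) F)
    (G : Matrix (Fin k) (Fin N) F) (v : Fin m → Fin n → F) (hv : ∀ i, Function.support (v i) ⊆ X i)
    (hB : ∀ i, v i + Pi.single (f i) 1 ∈ LinearMap.range B.mulVecLin)
    (hG : ∀ c ≠ 0, 2 * δ + 1 ≤ hammingNorm (c ᵥ* G)) : IsECIC X f δ (B * G) := by
  rintro z ⟨i, hz, hzf⟩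
  rw [← vecMul_vecMul]
  refine hG _ fun hzB => hzf ?_
  obtain ⟨y, hy⟩ := hB i
  have hzy := congrArg (z ⬝ᵥ ·) hy
  simpa [dotProduct_mulVec, hzB, dotProduct_add,
    dotProduct_eq_zero_of_support_subset hz (hv i)] using hzy.symm

theorem IsECIC.minrank_add_two_mul_le {N δ : ℕ} (hf : ∀ i, f i ∉ X i) (hm : 0 < m)
    {L : Matrix (Fin n) (Fin N) F} (hL : IsECIC X f δ L) : minrank F X f + 2 * δ ≤ N := by
  have hN : 2 * δ + 1 ≤ N := by
    let i : Fin m := ⟨0, hm⟩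
    calc 2 * δ + 1 ≤ hammingNorm (Pi.single (f i) 1 ᵥ* L) :=
          hL _ ⟨i, fun j hj => Pi.single_eq_of_ne (ne_of_mem_of_not_mem hj (hf i)) 1, by simp⟩
      _ ≤ N := hammingNorm_le_card_fintype.trans_eq (Fintype.card_fin N)
  obtain ⟨S, -, hS⟩ := exists_subset_card_eq (s := (univ : Finset (Fin N))) (n := N - 2 * δ)
    (by simp)
  have hκ : minrank F X f ≤ Fintype.card S :=
    minrank_le_card_of_vecMul_ne_zero X f (L.submatrix id (↑)) fun z i hz hzf hzL => by
      have hsmall := hammingNorm_le_card_sub_card (u := z ᵥ* L) S fun k hk => congrFun hzL ⟨k, hk⟩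
      have hlarge := hL z ⟨i, hz, hzf⟩
      rw [Fintype.card_fin, hS] at hsmall
      omega
  rw [Fintype.card_coe, hS] at hκ
  omega

theorem exists_isECIC [Fintype F] (δ : ℕ) (hq : minrank F X f + 2 * δ - 1 ≤ Fintype.card F) :
    ∃ L : Matrix (Fin n) (Fin (minrank F X f + 2 * δ)) F, IsECIC X f δ L := by
  obtain ⟨v, hv, hrank⟩ := exists_finrank_eq_minrank (F := F) X f
  obtain ⟨B, hB⟩ := exists_matrix_range_mulVecLin_eq _ hrank
  obtain ⟨G, hG⟩ := exists_mds_generatorMatrix (F := F) (ι := Fin (minrank F X f + 2 * δ))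
    (minrank F X f) (by rw [Fintype.card_fin]; omega)
  refine ⟨B * G, isECIC_mul X f δ B G v hv (fun i => hB ▸ Submodule.subset_span ⟨i, rfl⟩)
    fun c hc => ?_⟩
  have hweight := hG c hc
  rw [Fintype.card_fin] at hweight
  omega

end IndexCoding

/-- MDS ECIC: if q ≥ κ_q(H) + 2δ - 1, then the optimal length of a
linear δ-error-correcting index code over F_q equals κ_q(H) + 2δ. -/
theorem mds_ecic {m n : ℕ} {F : Type} [Field F] [Fintype F] [DecidableEq F]
    (X : Fin m → Finset (Fin n)) (f : Fin m → Fin n) (hf : ∀ i, f i ∉ X i)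
    (hm : 0 < m) (δ : ℕ)
    (hq : minrank F X f + 2 * δ - 1 ≤ Fintype.card F) :
    sInf {N : ℕ | ∃ L : Matrix (Fin n) (Fin N) F, IsECIC X f δ L} =
      minrank F X f + 2 * δ := by
  obtain ⟨L, hL⟩ := exists_isECIC X f δ hq
  refine le_antisymm (Nat.sInf_le ⟨L, hL⟩) (le_csInf ⟨_, L, hL⟩ ?_)
  rintro N ⟨L', hL'⟩
  exact hL'.minrank_add_two_mul_le X f hf hm
end

section
/- (Random coding bound) For an ICSI instance (m,n,X,f), if Σ_{i∈[m]} q^{n - |X_i| - 1} < q^N / V_q(N, 2δ), where V_q(N,2δ) = Σ_{ℓ=0}^{2δ} C(N,ℓ)(q-1)^ℓ, then there exists an n×N matrix L over F_q corresponding to a δ-error-correcting index code for this instance. -/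
/-!
Normalise a bad message vector `z` (one vanishing on `X i` with `z (f i) ≠ 0` and
`wt (z L) ≤ 2δ`) so that `z (f i) = 1`; there are `q ^ (n - |X i| - 1)` such vectors. For fixed
`z ≠ 0` the map `L ↦ z L` is a surjective group homomorphism onto `F ^ N`, so each of its fibres
contains exactly a `q ^ (-N)` fraction of all matrices. A union bound over `i`, the normalised
`z` and the `V_q(N, 2δ)` vectors `v` of weight at most `2δ` shows that, under the hypothesis,
fewer than `q ^ (nN)` matrices are bad, so some matrix is good.
-/

open Matrix Finset Function

theorem AddMonoidHom.card_fiber_mul_card_of_surjective {G H : Type*} [AddGroup G] [Fintype G]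
    [AddGroup H] [Fintype H] [DecidableEq H] (φ : G →+ H) (hφ : Surjective φ) (y : H) :
    #{g | φ g = y} * Fintype.card H = Fintype.card G := by
  have hfib (y' : H) : #{g | φ g = y'} = #{g | φ g = y} :=
    AddMonoidHom.card_fiber_eq_of_mem_range φ (hφ y') (hφ y)
  have hsum : Fintype.card G = ∑ y', #{g | φ g = y'} :=
    card_eq_sum_card_fiberwise (s := univ) (t := univ) (by simp)
  simp [hsum, hfib, mul_comm]

theorem card_filter_forall_mem_eq {κ β : Type*} [Fintype κ] [DecidableEq κ] [Fintype β]
    [DecidableEq β] (s : Finset κ) (c : κ → β) :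
    #{z : κ → β | ∀ j ∈ s, z j = c j} = Fintype.card β ^ (Fintype.card κ - #s) := by
  have hpi : ({z : κ → β | ∀ j ∈ s, z j = c j} : Finset _) =
      Fintype.piFinset fun j => if j ∈ s then {c j} else univ := by
    ext z
    simp only [mem_filter, mem_univ, true_and, Fintype.mem_piFinset]
    refine forall_congr' fun j => ?_
    by_cases hj : j ∈ s <;> simp [hj]
  rw [hpi, Fintype.card_piFinset]
  simp [apply_ite card, ← card_compl, prod_ite, filter_notMem_eq_sdiff, compl_eq_univ_sdiff]

/-- The volume `V_q(N, r)` of a Hamming ball of radius `r` in `F ^ N`, where `q = |F|`. -/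
def hammingVolume (q N r : ℕ) : ℕ := ∑ ℓ ∈ range (r + 1), N.choose ℓ * (q - 1) ^ ℓ

theorem hammingVolume_pos (q N r : ℕ) : 0 < hammingVolume q N r :=
  lt_of_lt_of_le (by simp) <|
    single_le_sum (f := fun ℓ => N.choose ℓ * (q - 1) ^ ℓ) (fun _ _ => Nat.zero_le _)
      (mem_range.2 r.succ_pos)

theorem card_filter_hammingNorm_le_le_hammingVolume {ι F : Type*} [Fintype ι] [DecidableEq ι]
    [Fintype F] [DecidableEq F] [Zero F] (r : ℕ) :
    #{v : ι → F | hammingNorm v ≤ r} ≤ hammingVolume (Fintype.card F) (Fintype.card ι) r := by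
  let exactSupport (S : Finset ι) : Finset (ι → F) :=
    Fintype.piFinset fun j => if j ∈ S then {0}ᶜ else {0}
  have hcard (S : Finset ι) : #(exactSupport S) = (Fintype.card F - 1) ^ #S := by
    simp [exactSupport, Fintype.card_piFinset, apply_ite card, card_compl, prod_ite_mem]
  have hsub : ({v : ι → F | hammingNorm v ≤ r} : Finset _) ⊆
      (range (r + 1)).biUnion fun ℓ => (powersetCard ℓ univ).biUnion exactSupport := by
    intro v hv
    simp only [mem_filter, mem_univ, true_and] at hv
    simp only [mem_biUnion, mem_range, mem_powersetCard, subset_univ, true_and]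
    refine ⟨_, Nat.lt_succ_of_le hv, ({j | v j ≠ 0} : Finset ι), rfl, ?_⟩
    simp only [exactSupport, Fintype.mem_piFinset]
    intro j
    by_cases hj : v j = 0 <;> simp [hj]
  calc #{v : ι → F | hammingNorm v ≤ r}
      ≤ ∑ ℓ ∈ range (r + 1), ∑ S ∈ powersetCard ℓ univ, #(exactSupport S) :=
        (card_le_card hsub).trans <| card_biUnion_le.trans <|
          sum_le_sum fun _ _ => card_biUnion_le
    _ = hammingVolume (Fintype.card F) (Fintype.card ι) r := by
        refine sum_congr rfl fun ℓ _ => ?_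
        rw [sum_congr rfl fun S hS => by rw [hcard, (mem_powersetCard.mp hS).2]]
        simp

section RandomCoding

variable {κ ι F : Type*} [Fintype κ] [DecidableEq κ] [Fintype ι] [DecidableEq ι]
  [Field F] [Fintype F] [DecidableEq F]

theorem card_filter_vecMul_eq_mul_card {z : κ → F} (hz : z ≠ 0) (v : ι → F) :
    #{L : Matrix κ ι F | z ᵥ* L = v} * Fintype.card (ι → F) = Fintype.card (Matrix κ ι F) := by
  obtain ⟨k, hk⟩ := ne_iff.mp hz
  refine (AddMonoidHom.mk' (z ᵥ* ·) fun A B => vecMul_add A B z).card_fiber_mul_card_of_surjective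
    (fun w => ⟨vecMulVec (Pi.single k (z k)⁻¹) w, ?_⟩) v
  simp [vecMul_vecMulVec, dotProduct_single, mul_inv_cancel₀ hk]

theorem card_filter_exists_hammingNorm_vecMul_le_mul_le {X : Finset κ} {k : κ} (hk : k ∉ X)
    (r : ℕ) :
    #{L : Matrix κ ι F | ∃ z : κ → F, (∀ j ∈ X, z j = 0) ∧ z k ≠ 0 ∧ hammingNorm (z ᵥ* L) ≤ r} *
        Fintype.card (ι → F) ≤
      Fintype.card F ^ (Fintype.card κ - #X - 1) *
        hammingVolume (Fintype.card F) (Fintype.card ι) r * Fintype.card (Matrix κ ι F) := by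
  set Z : Finset (κ → F) := {z | ∀ j ∈ insert k X, z j = (Pi.single k 1 : κ → F) j}
  set ball : Finset (ι → F) := {v | hammingNorm v ≤ r}
  have hZ : ∀ z ∈ Z, z ≠ 0 := fun z hz h0 => by simpa [Z, h0] using (mem_filter.1 hz).2 k
  have hsub : ({L : Matrix κ ι F | ∃ z : κ → F, (∀ j ∈ X, z j = 0) ∧ z k ≠ 0 ∧
      hammingNorm (z ᵥ* L) ≤ r} : Finset _) ⊆
      Z.biUnion fun z => ball.biUnion fun v => {L | z ᵥ* L = v} := by
    intro L hL
    obtain ⟨z, hzX, hzk, hwt⟩ := (mem_filter.1 hL).2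
    simp only [mem_biUnion, mem_filter, mem_univ, true_and, exists_eq_right', Z, ball]
    refine ⟨(z k)⁻¹ • z, ?_,
      (smul_vecMul (z k)⁻¹ z L).symm ▸ hammingNorm_smul_le_hammingNorm.trans hwt⟩
    intro j hj
    rcases mem_insert.1 hj with rfl | hj
    · simp [inv_mul_cancel₀ hzk]
    · simp [hzX j hj, ne_of_mem_of_not_mem hj hk]
  calc _ ≤ (∑ z ∈ Z, ∑ v ∈ ball, #{L : Matrix κ ι F | z ᵥ* L = v}) * Fintype.card (ι → F) :=
        Nat.mul_le_mul_right _ <| (card_le_card hsub).trans <| card_biUnion_le.trans <|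
          sum_le_sum fun _ _ => card_biUnion_le
    _ = ∑ z ∈ Z, ∑ v ∈ ball, Fintype.card (Matrix κ ι F) := by
        rw [sum_mul]
        refine sum_congr rfl fun z hz => ?_
        rw [sum_mul]
        exact sum_congr rfl fun v _ => card_filter_vecMul_eq_mul_card (hZ z hz) v
    _ = #Z * #ball * Fintype.card (Matrix κ ι F) := by simp [mul_assoc]
    _ ≤ _ := by
        gcongr
        · rw [card_filter_forall_mem_eq, card_insert_of_notMem hk, Nat.sub_sub, add_comm]
        · exact card_filter_hammingNorm_le_le_hammingVolume r

theorem exists_matrix_forall_lt_hammingNorm_vecMul {τ : Type*} [Fintype τ] (X : τ → Finset κ)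
    (f : τ → κ) (hf : ∀ i, f i ∉ X i) (r : ℕ)
    (h : (∑ i, Fintype.card F ^ (Fintype.card κ - #(X i) - 1)) *
        hammingVolume (Fintype.card F) (Fintype.card ι) r < Fintype.card F ^ Fintype.card ι) :
    ∃ L : Matrix κ ι F, ∀ i, ∀ z : κ → F, (∀ j ∈ X i, z j = 0) → z (f i) ≠ 0 →
      r < hammingNorm (z ᵥ* L) := by
  set bad : τ → Finset (Matrix κ ι F) := fun i =>
    {L | ∃ z : κ → F, (∀ j ∈ X i, z j = 0) ∧ z (f i) ≠ 0 ∧ hammingNorm (z ᵥ* L) ≤ r}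
  have hlt : #(univ.biUnion bad) < #(univ : Finset (Matrix κ ι F)) := by
    refine Nat.lt_of_mul_lt_mul_right (a := Fintype.card (ι → F)) ?_
    calc #(univ.biUnion bad) * Fintype.card (ι → F)
        ≤ ∑ i, #(bad i) * Fintype.card (ι → F) := by
          rw [← sum_mul]
          exact Nat.mul_le_mul_right _ card_biUnion_le
      _ ≤ ∑ i, Fintype.card F ^ (Fintype.card κ - #(X i) - 1) *
            hammingVolume (Fintype.card F) (Fintype.card ι) r * Fintype.card (Matrix κ ι F) :=
          sum_le_sum fun i _ => card_filter_exists_hammingNorm_vecMul_le_mul_le (hf i) r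
      _ < Fintype.card (ι → F) * Fintype.card (Matrix κ ι F) := by
          rw [← sum_mul, ← sum_mul, Fintype.card_fun]
          exact Nat.mul_lt_mul_of_pos_right h (Fintype.card_pos (α := Matrix κ ι F))
      _ = _ := by rw [card_univ, mul_comm]
  obtain ⟨L, -, hL⟩ := exists_mem_notMem_of_card_lt_card hlt
  refine ⟨L, fun i z hzX hzf => not_le.1 fun hwt => hL ?_⟩
  exact mem_biUnion.2 ⟨i, mem_univ i, mem_filter.2 ⟨mem_univ L, z, hzX, hzf, hwt⟩⟩

end RandomCoding

/-- random coding bound: if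
Σ_i q^{n-|X_i|-1} < q^N / V_q(N,2δ), where V_q(N,2δ) = Σ_{ℓ≤2δ} C(N,ℓ)(q-1)^ℓ,
then there exists an n×N matrix over F_q corresponding to a (δ,H)-ECIC. -/
theorem random_coding_bound {m n N : ℕ} {F : Type} [Field F] [Fintype F]
    [DecidableEq F]
    (X : Fin m → Finset (Fin n)) (f : Fin m → Fin n) (hf : ∀ i, f i ∉ X i)
    (δ : ℕ)
    (h : (∑ i : Fin m, ((Fintype.card F : ℝ) ^ (n - (X i).card - 1))) <
      (Fintype.card F : ℝ) ^ N /
        (∑ ℓ ∈ Finset.range (2 * δ + 1),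
          (N.choose ℓ : ℝ) * ((Fintype.card F : ℝ) - 1) ^ ℓ)) :
    ∃ L : Matrix (Fin n) (Fin N) F,
      ∀ z : Fin n → F, (∃ i : Fin m, (∀ j ∈ X i, z j = 0) ∧ z (f i) ≠ 0) →
        2 * δ + 1 ≤ hammingNorm (vecMul z L) := by
  have hV : ∑ ℓ ∈ range (2 * δ + 1), (N.choose ℓ : ℝ) * ((Fintype.card F : ℝ) - 1) ^ ℓ =
      hammingVolume (Fintype.card F) N (2 * δ) := by
    push_cast [hammingVolume, Nat.cast_sub Fintype.card_pos]
    rfl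
  rw [hV, lt_div_iff₀ (by exact_mod_cast hammingVolume_pos _ _ _)] at h
  have hnat : (∑ i, Fintype.card F ^ (n - #(X i) - 1)) *
      hammingVolume (Fintype.card F) N (2 * δ) < Fintype.card F ^ N := by
    exact_mod_cast h
  obtain ⟨L, hL⟩ := exists_matrix_forall_lt_hammingNorm_vecMul (ι := Fin N) X f hf (2 * δ)
    (by simpa using hnat)
  exact ⟨L, fun z ⟨i, hzX, hzf⟩ => hL i z hzX hzf⟩
end

section
/- Suppose L corresponds to a δ-error-correcting index code, y_i = xL + ε_i with wt(ε_i) ≤ δ, and receiver R_i knows some vector ε̂ ∈ L_i(ε_i) = ε_i + span{L_j : j ∈ Y_i}, together with y_i and x_{X_i}. Then x_{f(i)} is uniquely determined: if x' ∈ F_q^n satisfies x'_{X_i} = x_{X_i} and y_i = x'L + ε̂' for some ε̂' ∈ L_i(ε_i), then x'_{f(i)} = x_{f(i)}. -/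
open Matrix

/-!
Write `ε' - ε = c L` with `c` supported on `Y_i`. Then `w = x - x' - c` satisfies `w L = 0`,
vanishes on `X_i`, and has `w_{f(i)} = x_{f(i)} - x'_{f(i)}`. If that entry were nonzero, the ECIC
condition would give `wt (w L) ≥ 2δ + 1 > 0`, a contradiction.
-/

theorem Matrix.exists_vecMul_eq_of_mem_span_image {ι κ R : Type*} [Fintype ι] [Semiring R]
    {L : Matrix ι κ R} {s : Set ι} {v : κ → R} (hv : v ∈ Submodule.span R (L '' s)) :
    ∃ c : ι → R, (∀ j ∉ s, c j = 0) ∧ c ᵥ* L = v := by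
  obtain ⟨l, hl, rfl⟩ := Finsupp.mem_span_image_iff_linearCombination R |>.mp hv
  refine ⟨l, fun j hj => Finsupp.notMem_support_iff.mp fun h => hj (hl h), ?_⟩
  -- `Matrix ι κ R` is not syntactically a function type, so `linearCombination_apply` needs this.
  change _ = Finsupp.linearCombination R (fun i => L i) l
  rw [vecMul_eq_sum, Finsupp.linearCombination_apply]
  exact (Finsupp.sum_fintype l (fun i a => a • L i) fun i => zero_smul R (L i)).symm

theorem coset_determines_message_general {m n N : ℕ} {F : Type} [Field F]
    [DecidableEq F]
    (X : Fin m → Finset (Fin n)) (f : Fin m → Fin n)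
    (δ : ℕ) (L : Matrix (Fin n) (Fin N) F)
    (hL : ∀ z : Fin n → F, (∃ i : Fin m, (∀ j ∈ X i, z j = 0) ∧ z (f i) ≠ 0) →
      2 * δ + 1 ≤ hammingNorm (vecMul z L))
    (i : Fin m) (x : Fin n → F) (ε y : Fin N → F)
    (hy : y = vecMul x L + ε)
    (x' : Fin n → F) (hx' : ∀ j ∈ X i, x' j = x j)
    (ε' : Fin N → F)
    (hε' : ε' - ε ∈ Submodule.span F (L '' {j : Fin n | j ≠ f i ∧ j ∉ X i}))
    (hy' : y = vecMul x' L + ε') :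
    x' (f i) = x (f i) := by
  obtain ⟨c, hc, hcL⟩ := exists_vecMul_eq_of_mem_span_image hε'
  have hwL : (x - x' - c) ᵥ* L = 0 := by
    have hsum : x ᵥ* L + ε = x' ᵥ* L + ε' := hy.symm.trans hy'
    rw [sub_vecMul, sub_vecMul, hcL]
    linear_combination hsum
  by_contra hne
  have hweight := hL (x - x' - c) ⟨i, fun j hj => ?_, ?_⟩
  · simp [hwL] at hweight
  · simp [hx' j hj, hc j (by simp [hj])]
  · simpa [hc (f i) (by simp), sub_eq_zero] using Ne.symm hne

/-- if L is a (δ,H)-ECIC, y_i = xL + ε_i with wt(ε_i) ≤ δ, and the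
receiver knows some ε̂ in the coset L_i(ε_i) = ε_i + span{L_j : j ∈ Y_i}, then
x_{f(i)} is uniquely determined: any x' agreeing with x on X_i and satisfying
y_i = x'L + ε̂' for some ε̂' ∈ L_i(ε_i) has x'_{f(i)} = x_{f(i)}. -/
theorem coset_determines_message {m n N : ℕ} {F : Type} [Field F] [Fintype F]
    [DecidableEq F]
    (X : Fin m → Finset (Fin n)) (f : Fin m → Fin n) (hf : ∀ i, f i ∉ X i)
    (δ : ℕ) (L : Matrix (Fin n) (Fin N) F)
    (hL : ∀ z : Fin n → F, (∃ i : Fin m, (∀ j ∈ X i, z j = 0) ∧ z (f i) ≠ 0) →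
      2 * δ + 1 ≤ hammingNorm (vecMul z L))
    (i : Fin m) (x : Fin n → F) (ε y : Fin N → F)
    (hy : y = vecMul x L + ε) (hε : hammingNorm ε ≤ δ)
    (x' : Fin n → F) (hx' : ∀ j ∈ X i, x' j = x j)
    (ε' : Fin N → F)
    (hε' : ε' - ε ∈ Submodule.span F (L '' {j : Fin n | j ≠ f i ∧ j ∉ X i}))
    (hy' : y = vecMul x' L + ε') :
    x' (f i) = x (f i) :=
  coset_determines_message_general X f δ L hL i x ε y hy x' hx' ε' hε' hy'
end

section
/- (Syndrome decoding correctness) Let L correspond to a δ-error-correcting index code, let C_i = span({L_{f(i)}} ∪ {L_j : j ∈ Y_i}) with parity check matrix H^{(i)} (i.e., C_i = ker H^{(i)} as a row space condition), and let y_i = xL + ε_i with wt(ε_i) ≤ δ. Let ε̂ be any minimum-Hamming-weight solution of H^{(i)} ε̂^T = H^{(i)}(y_i - x_{X_i}L_{X_i})^T. Then any x̂ ∈ F_q^n with x̂_{X_i} = x_{X_i} and y_i = x̂L + ε̂ satisfies x̂_{f(i)} = x_{f(i)}. -/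
/-!
If `xh (f i) ≠ x (f i)`, then `z = xh - x` vanishes on `X i` but not at `f i`, so
`zL = ε - εh` has weight at least `2δ + 1`. On the other hand `ε` itself solves the syndrome
equation, because `xL - x_{X_i} L_{X_i}` lies in the span of the rows outside `X i`, which is
contained in `C_i = ker H`. Minimality of `εh` then gives `wt εh ≤ wt ε ≤ δ`, hence
`wt (ε - εh) ≤ 2δ`, a contradiction.
-/

open Matrix

theorem hammingNorm_sub_le {ι G : Type*} [Fintype ι] [AddCommGroup G] [DecidableEq G]
    (a b : ι → G) : hammingNorm (a - b) ≤ hammingNorm a + hammingNorm b :=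
  calc hammingNorm (a - b) = hammingDist b a := by
        rw [hammingDist_eq_hammingNorm, neg_add_eq_sub]
    _ ≤ hammingDist b 0 + hammingDist 0 a := hammingDist_triangle b 0 a
    _ = hammingNorm a + hammingNorm b := by
      rw [hammingDist_zero_right, hammingDist_zero_left, add_comm]

theorem vecMul_sub_sum_mem_span_compl {ι κ R : Type*} [Fintype ι] [DecidableEq ι]
    [Ring R] (x : ι → R) (L : Matrix ι κ R) (S : Finset ι) :
    x ᵥ* L - ∑ j ∈ S, x j • L j ∈ Submodule.span R (L '' (↑S)ᶜ) := by
  rw [vecMul_eq_sum, ← Finset.sum_sdiff_eq_sub (Finset.subset_univ S)]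
  refine Submodule.sum_mem _ fun j hj => Submodule.smul_mem _ _ (Submodule.subset_span ?_)
  exact ⟨j, by simpa using hj, rfl⟩

theorem syndrome_decoding_correct_general {m n N r : ℕ} {F : Type} [Field F]
    [DecidableEq F]
    (X : Fin m → Finset (Fin n)) (f : Fin m → Fin n)
    (δ : ℕ) (L : Matrix (Fin n) (Fin N) F)
    (hL : ∀ z : Fin n → F, (∃ i : Fin m, (∀ j ∈ X i, z j = 0) ∧ z (f i) ≠ 0) →
      2 * δ + 1 ≤ hammingNorm (vecMul z L))
    (i : Fin m) (H : Matrix (Fin r) (Fin N) F)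
    (hH : ∀ v : Fin N → F,
      v ∈ Submodule.span F ({L (f i)} ∪ L '' {j : Fin n | j ≠ f i ∧ j ∉ X i}) ↔
        H.mulVec v = 0)
    (x : Fin n → F) (ε y : Fin N → F)
    (hy : y = vecMul x L + ε) (hε : hammingNorm ε ≤ δ)
    (εh : Fin N → F)
    (hmin : ∀ e : Fin N → F,
      H.mulVec e = H.mulVec (y - ∑ j ∈ X i, x j • L j) →
        hammingNorm εh ≤ hammingNorm e)
    (xh : Fin n → F) (hxh : ∀ j ∈ X i, xh j = x j)
    (hyh : y = vecMul xh L + εh) :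
    xh (f i) = x (f i) := by
  by_contra hne
  have hfar : 2 * δ + 1 ≤ hammingNorm (ε - εh) := by
    have hzL : (xh - x) ᵥ* L = ε - εh := by
      rw [sub_vecMul]
      linear_combination -(hy.symm.trans hyh)
    rw [← hzL]
    exact hL _ ⟨i, fun j hj => sub_eq_zero.mpr (hxh j hj), sub_ne_zero.mpr hne⟩
  have hmem : x ᵥ* L - ∑ j ∈ X i, x j • L j ∈
      Submodule.span F ({L (f i)} ∪ L '' {j : Fin n | j ≠ f i ∧ j ∉ X i}) := by
    refine Submodule.span_mono ?_ (vecMul_sub_sum_mem_span_compl x L (X i))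
    rintro _ ⟨j, hj, rfl⟩
    by_cases hjf : j = f i
    · exact Or.inl (by rw [hjf]; rfl)
    · exact Or.inr ⟨j, ⟨hjf, hj⟩, rfl⟩
  have hsynd : H *ᵥ ε = H *ᵥ (y - ∑ j ∈ X i, x j • L j) := by
    rw [hy, add_sub_right_comm, mulVec_add, (hH _).mp hmem, zero_add]
  have hεh : hammingNorm εh ≤ δ := (hmin ε hsynd).trans hε
  have := hammingNorm_sub_le ε εh
  omega

/-- syndrome decoding correctness: with C_i = span({L_{f(i)}} ∪
{L_j : j ∈ Y_i}) and a parity check matrix H⁽ⁱ⁾ of C_i, if y_i = xL + ε_i with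
wt(ε_i) ≤ δ and εh is a minimum-weight solution of H⁽ⁱ⁾εhᵀ = H⁽ⁱ⁾(y_i - x_{X_i}L_{X_i})ᵀ,
then any xh with xh_{X_i} = x_{X_i} and y_i = xhL + εh satisfies xh_{f(i)} = x_{f(i)}. -/
theorem syndrome_decoding_correct {m n N r : ℕ} {F : Type} [Field F] [Fintype F]
    [DecidableEq F]
    (X : Fin m → Finset (Fin n)) (f : Fin m → Fin n) (hf : ∀ i, f i ∉ X i)
    (δ : ℕ) (L : Matrix (Fin n) (Fin N) F)
    (hL : ∀ z : Fin n → F, (∃ i : Fin m, (∀ j ∈ X i, z j = 0) ∧ z (f i) ≠ 0) →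
      2 * δ + 1 ≤ hammingNorm (vecMul z L))
    (i : Fin m) (H : Matrix (Fin r) (Fin N) F)
    (hH : ∀ v : Fin N → F,
      v ∈ Submodule.span F ({L (f i)} ∪ L '' {j : Fin n | j ≠ f i ∧ j ∉ X i}) ↔
        H.mulVec v = 0)
    (x : Fin n → F) (ε y : Fin N → F)
    (hy : y = vecMul x L + ε) (hε : hammingNorm ε ≤ δ)
    (εh : Fin N → F)
    (hsynd : H.mulVec εh = H.mulVec (y - ∑ j ∈ X i, x j • L j))
    (hmin : ∀ e : Fin N → F,
      H.mulVec e = H.mulVec (y - ∑ j ∈ X i, x j • L j) →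
        hammingNorm εh ≤ hammingNorm e)
    (xh : Fin n → F) (hxh : ∀ j ∈ X i, xh j = x j)
    (hyh : y = vecMul xh L + εh) :
    xh (f i) = x (f i) :=
  syndrome_decoding_correct_general X f δ L hL i H hH x ε y hy hε εh hmin xh hxh hyh
end

section
/- If L is an n×N matrix such that for each i ∈ [m] there exists v^i ∈ F_q^n with supp(v^i) ⊆ X_i and v^i + e_{f(i)} in the column span of L, then every receiver can decode in the error-free setting: for all x, x' ∈ F_q^n with x_{X_i} = x'_{X_i} and xL = x'L, we have x_{f(i)} = x'_{f(i)}. -/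
open Matrix

/-! The receiver computes `x_{f i} = x ⬝ᵥ (v + e_{f i}) - x ⬝ᵥ v`. The first term is a linear
combination of the entries of `xL`, because `v + e_{f i}` is a combination of columns of `L`,
and the second depends only on `x` restricted to `X i ⊇ supp v`. Two messages agreeing on both
data therefore agree at `f i`. -/

theorem Matrix.dotProduct_eq_of_vecMul_eq_of_mem_span_col {R ι κ : Type*} [CommRing R]
    [Fintype ι] [Fintype κ] (L : Matrix ι κ R) {x x' : ι → R} (hL : x ᵥ* L = x' ᵥ* L)
    {w : ι → R} (hw : w ∈ Submodule.span R (Set.range L.col)) : x ⬝ᵥ w = x' ⬝ᵥ w := by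
  obtain ⟨c, rfl⟩ : w ∈ LinearMap.range L.mulVecLin := L.range_mulVecLin ▸ hw
  simp only [mulVecLin_apply, dotProduct_mulVec, hL]

theorem Matrix.dotProduct_eq_of_eqOn_of_support_subset {R ι : Type*} [CommSemiring R]
    [Fintype ι] {s : Set ι} {v x x' : ι → R} (hv : Function.support v ⊆ s)
    (hx : Set.EqOn x x' s) : x ⬝ᵥ v = x' ⬝ᵥ v := by
  refine Finset.sum_congr rfl fun k _ => ?_
  by_cases hk : v k = 0
  · simp [hk]
  · rw [hx (hv hk)]

theorem column_span_implies_decoding_general {m n N : ℕ} {F : Type} [Field F]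
    (X : Fin m → Finset (Fin n)) (f : Fin m → Fin n)
    (L : Matrix (Fin n) (Fin N) F)
    (hv : ∀ i : Fin m, ∃ v : Fin n → F,
      Function.support v ⊆ (X i : Set (Fin n)) ∧
      v + Pi.single (f i) (1 : F) ∈
        Submodule.span F (Set.range fun j : Fin N => fun i' : Fin n => L i' j)) :
    ∀ i : Fin m, ∀ x x' : Fin n → F, (∀ j ∈ X i, x j = x' j) →
      vecMul x L = vecMul x' L → x (f i) = x' (f i) := by
  intro i x x' hX hL
  obtain ⟨v, hsupp, hspan⟩ := hv i
  have decode : ∀ y : Fin n → F, y (f i) = y ⬝ᵥ (v + Pi.single (f i) 1) - y ⬝ᵥ v := fun y => by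
    simp [dotProduct_add]
  rw [decode x, decode x', L.dotProduct_eq_of_vecMul_eq_of_mem_span_col hL hspan,
    dotProduct_eq_of_eqOn_of_support_subset hsupp fun j hj => hX j hj]

/-- if for each i there is v^i with supp(v^i) ⊆ X_i and
v^i + e_{f(i)} in the column span of L, then every receiver decodes in the
error-free setting: x_{X_i} = x'_{X_i} and xL = x'L imply x_{f(i)} = x'_{f(i)}. -/
theorem column_span_implies_decoding {m n N : ℕ} {F : Type} [Field F] [Fintype F]
    [DecidableEq F]
    (X : Fin m → Finset (Fin n)) (f : Fin m → Fin n) (hf : ∀ i, f i ∉ X i)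
    (L : Matrix (Fin n) (Fin N) F)
    (hv : ∀ i : Fin m, ∃ v : Fin n → F,
      Function.support v ⊆ (X i : Set (Fin n)) ∧
      v + Pi.single (f i) (1 : F) ∈
        Submodule.span F (Set.range fun j : Fin N => fun i' : Fin n => L i' j)) :
    ∀ i : Fin m, ∀ x x' : Fin n → F, (∀ j ∈ X i, x j = x' j) →
      vecMul x L = vecMul x' L → x (f i) = x' (f i) :=
  column_span_implies_decoding_general X f L hv
end

section
/- Conversely, if an n×N matrix L over F_q satisfies wt(zL) ≥ 1 for all z ∈ I(q,H) = {z : ∃i, z_{X_i} = 0, z_{f(i)} ≠ 0}, then for each i ∈ [m] there exists v^i ∈ F_q^n with supp(v^i) ⊆ X_i such that v^i + e_{f(i)} lies in the column span of L. -/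
open Matrix

/-!
If `e_{f(i)}` were not in the sum of the column span of `L` and the space of vectors supported
on `X i`, duality would give a row vector `z` annihilating both but not `e_{f(i)}`: then
`z` vanishes on `X i`, `z (f i) ≠ 0` and `z L = 0`, contradicting the hypothesis.
-/

section

variable {K ι : Type*} [Field K] [Fintype ι] [DecidableEq ι]

theorem Submodule.mem_of_forall_dotProduct_eq_zero {W : Submodule K (ι → K)} {x : ι → K}
    (h : ∀ z : ι → K, (∀ w ∈ W, z ⬝ᵥ w = 0) → z ⬝ᵥ x = 0) : x ∈ W := by
  rw [← Subspace.forall_mem_dualAnnihilator_apply_eq_zero_iff]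
  intro φ hφ
  obtain ⟨z, rfl⟩ := (dotProductEquiv K ι).surjective φ
  exact h z fun w hw => (Submodule.mem_dualAnnihilator _).mp hφ w hw

theorem exists_support_subset_add_single_mem_s19 (W : Submodule K (ι → K)) (S : Set ι) (k : ι)
    (hW : ∀ z : ι → K, (∀ j ∈ S, z j = 0) → z k ≠ 0 → ∃ w ∈ W, z ⬝ᵥ w ≠ 0) :
    ∃ v : ι → K, Function.support v ⊆ S ∧ v + Pi.single k 1 ∈ W := by
  let P : Submodule K (ι → K) := Submodule.pi Sᶜ fun _ => ⊥
  have hP : ∀ v, v ∈ P ↔ Function.support v ⊆ S := fun v => by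
    rw [Function.support_subset_iff']; simp [P, Submodule.mem_pi]
  have hsingle : Pi.single k 1 ∈ W ⊔ P := by
    refine Submodule.mem_of_forall_dotProduct_eq_zero fun z hz => ?_
    have hzS : ∀ j ∈ S, z j = 0 := fun j hj => by
      have hjP : Pi.single j 1 ∈ P :=
        (hP _).mpr (Pi.support_single_subset.trans (Set.singleton_subset_iff.mpr hj))
      simpa using hz _ (Submodule.mem_sup_right hjP)
    by_contra hzk
    obtain ⟨w, hw, hzw⟩ := hW z hzS (by simpa using hzk)
    exact hzw (hz w (Submodule.mem_sup_left hw))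
  obtain ⟨w, hw, p, hp, hwp⟩ := Submodule.mem_sup.mp hsingle
  refine ⟨-p, by simpa using (hP p).mp hp, ?_⟩
  rwa [← hwp, neg_add_cancel_comm_assoc]

end

theorem decoding_implies_column_span_general {m n N : ℕ} {F : Type} [Field F]
    [DecidableEq F]
    (X : Fin m → Finset (Fin n)) (f : Fin m → Fin n)
    (L : Matrix (Fin n) (Fin N) F)
    (hL : ∀ z : Fin n → F, (∃ i : Fin m, (∀ j ∈ X i, z j = 0) ∧ z (f i) ≠ 0) →
      1 ≤ hammingNorm (vecMul z L)) :
    ∀ i : Fin m, ∃ v : Fin n → F,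
      Function.support v ⊆ (X i : Set (Fin n)) ∧
      v + Pi.single (f i) (1 : F) ∈
        Submodule.span F (Set.range fun j : Fin N => fun i' : Fin n => L i' j) := by
  intro i
  refine exists_support_subset_add_single_mem_s19 _ _ _ fun z hzX hzf => ?_
  obtain ⟨j, hj⟩ : ∃ j, vecMul z L j ≠ 0 := Function.ne_iff.mp <|
    hammingNorm_pos_iff.mp <| hL z ⟨i, hzX, hzf⟩
  exact ⟨_, Submodule.subset_span ⟨j, rfl⟩, hj⟩

/-- conversely, if wt(zL) ≥ 1 for all z ∈ I(q,H), then for each i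
there exists v^i with supp(v^i) ⊆ X_i such that v^i + e_{f(i)} lies in the column
span of L. -/
theorem decoding_implies_column_span {m n N : ℕ} {F : Type} [Field F] [Fintype F]
    [DecidableEq F]
    (X : Fin m → Finset (Fin n)) (f : Fin m → Fin n) (hf : ∀ i, f i ∉ X i)
    (L : Matrix (Fin n) (Fin N) F)
    (hL : ∀ z : Fin n → F, (∃ i : Fin m, (∀ j ∈ X i, z j = 0) ∧ z (f i) ≠ 0) →
      1 ≤ hammingNorm (vecMul z L)) :
    ∀ i : Fin m, ∃ v : Fin n → F,
      Function.support v ⊆ (X i : Set (Fin n)) ∧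
      v + Pi.single (f i) (1 : F) ∈
        Submodule.span F (Set.range fun j : Fin N => fun i' : Fin n => L i' j) :=
  decoding_implies_column_span_general X f L hL
end
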